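/- Let k ≥ 2 and m ≥ 2 be integers and set d = k·m and n = m + 1. Then the following n partitions of d are NOT realized by permutations: (k, k, …, k) (m copies of k); (k, k, …, k) (m copies of k); (m + 1, 1, …, 1) with d − m − 1 ones; and m − 2 copies of (2, 1, …, 1) with d − 2 ones each. -/

import Mathlib

/-- Multiset of cycle lengths of a permutation of a finite type, counting each
fixed point as a cycle of length 1. -/
def fullCycleType {α : Type*} [Fintype α] [DecidableEq α] (τ : Equiv.Perm α) :
    Multiset ℕ :=
  τ.cycleType + Multiset.replicate (Fintype.card α - τ.cycleType.sum) 1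

/-- The `n` partitions `parts 0, …, parts (n-1)` of `d` are realized by permutations:
there are `τ₁, …, τₙ ∈ S_d` with `τ₁ ⋯ τₙ = 1`, generating a subgroup acting
transitively on `{1, …, d}`, where the multiset of cycle lengths of `τᵢ`
(fixed points counting as cycles of length 1) is `parts i`. -/
def realizable (d n : ℕ) (parts : Fin n → Multiset ℕ) : Prop :=
  ∃ τ : Fin n → Equiv.Perm (Fin d),
    (List.ofFn τ).prod = 1 ∧
    (∀ x y : Fin d, ∃ g ∈ Subgroup.closure (Set.range τ), g x = y) ∧
    ∀ i, fullCycleType (τ i) = parts i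

/-!
Suppose `τ₀, …, τₘ ∈ Sym(X)` with `|X| = km` realize the data. Lift them to `X × ℤ/k`, letting
`τ₀` raise the level by `1`, `τ₁` lower it by `1` and the other `τᵢ` act levelwise: this is the
monodromy of the fibre product with the `k`-fold cyclic cover branched over the first two points,
and the lifts still multiply to `1`. The lifts of `τ₀` and `τ₁` are fixed-point-free of order `k`,
so with `N = k²m` Ree's inequality `∑ᵢ (N - #cycles) ≥ 2 (N - #orbits)` yields at least `k`
orbits. By transitivity downstairs every orbit meets every fibre, so there are exactly `k` orbits
and each meets every fibre once. The `(m+1)`-cycle `τ₂` acts levelwise, so its support sits in a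
single level of one orbit, while its images under `τ₀ⁱ`, `i ∈ ℤ/k`, sit in `k` distinct levels
and are therefore disjoint: `k (m + 1) ≤ km`, which is absurd.
-/

open Equiv Equiv.Perm Finset Relation

namespace Setoid

variable {α : Type*}

def glue (s : Setoid α) (a b : α) : Setoid α :=
  EqvGen.setoid fun x y => s x y ∨ x = a ∧ y = b

variable {s u : Setoid α} {a b : α}

theorem le_glue : s ≤ s.glue a b := fun _ _ h => EqvGen.rel _ _ (Or.inl h)

theorem glue_rel : s.glue a b a b := EqvGen.rel _ _ (Or.inr ⟨rfl, rfl⟩)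

theorem glue_le (h : s ≤ u) (hab : u a b) : s.glue a b ≤ u :=
  eqvGen_le fun _ _ hxy => hxy.elim (h ·) fun ⟨hx, hy⟩ => hx ▸ hy ▸ hab

theorem glue_eq_self (hab : s a b) : s.glue a b = s :=
  le_antisymm (glue_le le_rfl hab) le_glue

theorem rel_of_glue_rel {x y : α} (h : s.glue a b x y) (hx : ¬ s x b) (hy : ¬ s y b) :
    s x y := by
  classical
  -- `f` identifies the class of `b` with that of `a` and nothing else
  let f : α → Quotient s := fun z => if s z b then ⟦a⟧ else ⟦z⟧
  have hf : s.glue a b ≤ Setoid.ker f := by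
    refine glue_le (fun x y hxy => ker_def.mpr ?_) (ker_def.mpr ?_)
    · have hb : s x b ↔ s y b := ⟨s.trans (s.symm hxy), s.trans hxy⟩
      by_cases hxb : s x b
      · simp [f, hxb, hb.mp hxb]
      · simp [f, hxb, mt hb.mpr hxb, Quotient.sound hxy]
    · simp [f]
  have hfxy := ker_def.mp (hf h)
  simp only [f, hx, hy, if_false] at hfxy
  exact Quotient.exact hfxy

def classStabilizer (s : Setoid α) : Subgroup (Perm α) where
  carrier := {g | ∀ x, s x (g x)}
  one_mem' := s.refl
  mul_mem' hg hh x := s.trans (hh x) (hg _)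
  inv_mem' {g} hg x := s.symm (by simpa using hg (g⁻¹ x))

theorem mem_classStabilizer {g : Perm α} : g ∈ s.classStabilizer ↔ ∀ x, s x (g x) := Iff.rfl

theorem classStabilizer_mono (h : s ≤ u) : s.classStabilizer ≤ u.classStabilizer :=
  fun _ hg x => h (hg x)

theorem swap_mem_classStabilizer [DecidableEq α] (hab : s a b) :
    swap a b ∈ s.classStabilizer := by
  intro x
  rcases eq_or_ne x a with rfl | hxa
  · simpa using hab
  rcases eq_or_ne x b with rfl | hxb
  · simpa using s.symm hab
  · simp [swap_apply_of_ne_of_ne hxa hxb]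

theorem sameCycle_setoid_le {g : Perm α} (hg : g ∈ s.classStabilizer) :
    SameCycle.setoid g ≤ s := by
  rintro x _ ⟨i, rfl⟩
  exact zpow_mem hg i x

section Finite

variable [Finite α]

theorem card_quotient_le_of_le (h : s ≤ u) : Nat.card (Quotient u) ≤ Nat.card (Quotient s) :=
  Nat.card_le_card_of_surjective (Quotient.map' id h) fun q =>
    q.inductionOn fun x => ⟨⟦x⟧, rfl⟩

theorem card_quotient_le_card_quotient_glue_add_one :
    Nat.card (Quotient s) ≤ Nat.card (Quotient (s.glue a b)) + 1 := by
  classical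
  let f : Quotient s → Option (Quotient (s.glue a b)) := fun q =>
    if q = ⟦b⟧ then none else some (Quotient.map' id (fun _ _ => (le_glue ·)) q)
  have hf : Function.Injective f := by
    intro q q'
    induction q using Quotient.inductionOn with | h x => ?_
    induction q' using Quotient.inductionOn with | h y => ?_
    by_cases hx : s x b <;> by_cases hy : s y b <;>
      simp only [f, Quotient.eq, Quotient.map'_mk'', id_eq, hx, hy, ↓reduceIte, reduceCtorEq,
        Option.some.injEq, IsEmpty.forall_iff, forall_const]
    · exact s.trans hx (s.symm hy)
    · exact fun h => rel_of_glue_rel h hx hy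
  simpa [Finite.card_option] using Nat.card_le_card_of_injective f hf

theorem card_quotient_glue_lt (hab : ¬ s a b) :
    Nat.card (Quotient (s.glue a b)) < Nat.card (Quotient s) := by
  by_contra! hle
  have hπ : Function.Surjective (Quotient.map' id (fun _ _ => (le_glue ·)) :
      Quotient s → Quotient (s.glue a b)) := fun q => q.inductionOn fun x => ⟨⟦x⟧, rfl⟩
  exact hab (Quotient.exact ((hπ.bijective_of_nat_card_le hle).injective
    (Quotient.sound glue_rel)))

end Finite

theorem eq_of_rel_of_card_le {X A : Type*} [Finite A] {s : Setoid (X × A)}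
    (hmeet : ∀ x y j, ∃ j', s (x, j) (y, j')) (hcard : Nat.card A ≤ Nat.card (Quotient s))
    {y : X} {j j' : A} (h : s (y, j) (y, j')) : j = j' := by
  let f : A → Quotient s := fun j => ⟦(y, j)⟧
  have hf : Function.Surjective f := fun q => q.inductionOn fun ⟨x, i⟩ => by
    obtain ⟨i', hi'⟩ := hmeet x y i
    exact ⟨i', Quotient.sound (s.symm hi')⟩
  exact (hf.bijective_of_nat_card_le hcard).injective (Quotient.sound h)

end Setoid

namespace Equiv.Perm

section Orbits

variable {α : Type*}

def orbitSetoid (S : Set (Perm α)) : Setoid α :=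
  EqvGen.setoid fun x y => ∃ g ∈ S, g x = y

variable {S : Set (Perm α)} {s : Setoid α}

theorem orbitSetoid_le_iff : orbitSetoid S ≤ s ↔ S ⊆ s.classStabilizer :=
  ⟨fun h g hg _ => h (EqvGen.rel _ _ ⟨g, hg, rfl⟩),
    fun h => Setoid.eqvGen_le fun _ _ ⟨_, hg, hgx⟩ => hgx ▸ h hg _⟩

theorem closure_le_classStabilizer_orbitSetoid :
    Subgroup.closure S ≤ (orbitSetoid S).classStabilizer :=
  (Subgroup.closure_le _).mpr (orbitSetoid_le_iff.mp le_rfl)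

theorem orbitSetoid_mono {T : Set (Perm α)} (h : S ⊆ T) : orbitSetoid S ≤ orbitSetoid T :=
  orbitSetoid_le_iff.mpr (h.trans (orbitSetoid_le_iff.mp le_rfl))

variable [DecidableEq α]

theorem orbitSetoid_insert_swap (a b : α) :
    orbitSetoid (insert (swap a b) S) = (orbitSetoid S).glue a b := by
  refine le_antisymm (orbitSetoid_le_iff.mpr ?_) (Setoid.glue_le ?_ ?_)
  · refine Set.insert_subset (Setoid.swap_mem_classStabilizer Setoid.glue_rel) ?_
    exact (orbitSetoid_le_iff.mp le_rfl).trans (Setoid.classStabilizer_mono Setoid.le_glue)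
  · exact orbitSetoid_mono (Set.subset_insert _ _)
  · exact EqvGen.rel _ _ ⟨swap a b, Set.mem_insert _ _, swap_apply_left a b⟩

theorem sameCycle_setoid_swap_mul_le (σ : Perm α) (a b : α) :
    SameCycle.setoid (swap a b * σ) ≤ (SameCycle.setoid σ).glue a b :=
  Setoid.sameCycle_setoid_le <| mul_mem (Setoid.swap_mem_classStabilizer Setoid.glue_rel)
    (Setoid.classStabilizer_mono Setoid.le_glue (Setoid.mem_classStabilizer.mpr
      fun x => ⟨1, by simp⟩))

theorem glue_sameCycle_setoid_swap_mul (σ : Perm α) (a b : α) :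
    (SameCycle.setoid (swap a b * σ)).glue a b = (SameCycle.setoid σ).glue a b := by
  refine le_antisymm (Setoid.glue_le (sameCycle_setoid_swap_mul_le σ a b) Setoid.glue_rel) ?_
  conv_lhs => rw [← swap_mul_self_mul a b σ]
  exact Setoid.glue_le (sameCycle_setoid_swap_mul_le _ a b) Setoid.glue_rel

end Orbits

section NumCycles

variable {α : Type*} [Fintype α]

noncomputable def numCycles (σ : Perm α) : ℕ := Nat.card (Quotient (SameCycle.setoid σ))

@[simp]
theorem numCycles_one : numCycles (1 : Perm α) = Fintype.card α := by
  have : SameCycle.setoid (1 : Perm α) = ⊥ := by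
    ext x y
    exact sameCycle_one
  rw [numCycles, this, Nat.card_congr Setoid.quotientBotEquiv, Nat.card_eq_fintype_card]

variable [DecidableEq α]

theorem numCycles_add_card_support (σ : Perm α) :
    numCycles σ + #σ.support = Multiset.card σ.cycleType + Fintype.card α := by
  -- a class is either a fixed point or the support of a cycle factor
  let F : α → (σ.supportᶜ : Finset α) ⊕ σ.cycleFactorsFinset := fun x =>
    if hx : x ∈ σ.support then .inr ⟨σ.cycleOf x, cycleOf_mem_cycleFactorsFinset_iff.mpr hx⟩
    else .inl ⟨x, mem_compl.mpr hx⟩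
  have hF : ∀ x y, F x = F y ↔ σ.SameCycle x y := by
    intro x y
    by_cases hx : x ∈ σ.support <;> by_cases hy : y ∈ σ.support
    · simp only [F, dif_pos hx, dif_pos hy, Sum.inr.injEq, Subtype.mk.injEq]
      exact (sameCycle_iff_cycleOf_eq_of_mem_support hx hy).symm
    · simp only [F, dif_pos hx, dif_neg hy, reduceCtorEq, false_iff]
      exact fun h => hy (h.mem_support_iff.mp hx)
    · simp only [F, dif_neg hx, dif_pos hy, reduceCtorEq, false_iff]
      exact fun h => hx (h.mem_support_iff.mpr hy)
    · simp only [F, dif_neg hx, dif_neg hy, Sum.inl.injEq, Subtype.mk.injEq]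
      exact ⟨fun h => h ▸ SameCycle.rfl, fun h => h.eq_of_left (notMem_support.mp hx)⟩
  have hbij : Function.Bijective
      (Quotient.lift (s := SameCycle.setoid σ) F fun x y h => (hF x y).mpr h) := by
    refine ⟨fun q q' => ?_, ?_⟩
    · induction q using Quotient.inductionOn with | h x => ?_
      induction q' using Quotient.inductionOn with | h y => ?_
      exact fun h => Quotient.sound ((hF x y).mp h)
    · rintro (⟨x, hx⟩ | ⟨c, hc⟩)
      · exact ⟨⟦x⟧, dif_neg (mem_compl.mp hx)⟩
      · obtain ⟨x, hx⟩ := (mem_cycleFactorsFinset_iff.mp hc).1.nonempty_support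
        refine ⟨⟦x⟧, ?_⟩
        simp only [Quotient.lift_mk, F, dif_pos (mem_cycleFactorsFinset_support_le hc hx),
          cycle_is_cycleOf hx hc]
  have hcard := Nat.card_congr (Equiv.ofBijective _ hbij)
  rw [Nat.card_sum, Nat.card_eq_finsetCard, Nat.card_eq_finsetCard, card_compl] at hcard
  rw [numCycles, hcard, cycleType_def, Multiset.card_map, Finset.card_val]
  have := σ.support.card_le_univ
  omega

theorem sign_eq_neg_one_pow_numCycles (σ : Perm α) :
    sign σ = (-1) ^ (Fintype.card α + numCycles σ) := by
  have h := numCycles_add_card_support σ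
  have hparity : Fintype.card α + numCycles σ + 2 * #σ.support =
      (#σ.support + Multiset.card σ.cycleType) + 2 * Fintype.card α := by omega
  calc sign σ
      = (-1) ^ (#σ.support + Multiset.card σ.cycleType) * ((-1) ^ 2) ^ Fintype.card α := by
        rw [sign_of_cycleType, sum_cycleType, neg_one_sq, one_pow, mul_one]
    _ = (-1) ^ (Fintype.card α + numCycles σ) * ((-1) ^ 2) ^ #σ.support := by
        rw [← pow_mul, ← pow_mul, ← pow_add, ← pow_add, hparity]
    _ = (-1) ^ (Fintype.card α + numCycles σ) := by rw [neg_one_sq, one_pow, mul_one]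

theorem numCycles_swap_mul_ne {a b : α} (hab : a ≠ b) (σ : Perm α) :
    numCycles (swap a b * σ) ≠ numCycles σ := fun h => by
  have := sign_eq_neg_one_pow_numCycles (swap a b * σ)
  rw [h, ← sign_eq_neg_one_pow_numCycles, sign_mul, sign_swap hab, neg_one_mul] at this
  exact units_ne_neg_self _ this.symm

theorem numCycles_le_numCycles_swap_mul_add_one (σ : Perm α) (a b : α) :
    numCycles σ ≤ numCycles (swap a b * σ) + 1 :=
  Setoid.card_quotient_le_card_quotient_glue_add_one.trans
    (Nat.add_le_add_right (Setoid.card_quotient_le_of_le (sameCycle_setoid_swap_mul_le σ a b)) 1)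

theorem numCycles_swap_mul_le_add_one (σ : Perm α) (a b : α) :
    numCycles (swap a b * σ) ≤ numCycles σ + 1 := by
  simpa using numCycles_le_numCycles_swap_mul_add_one (swap a b * σ) a b

theorem numCycles_lt_numCycles_swap_mul {σ : Perm α} {a b : α} (hab : a ≠ b)
    (h : σ.SameCycle a b) : numCycles σ < numCycles (swap a b * σ) := by
  have hle := Setoid.card_quotient_le_of_le (sameCycle_setoid_swap_mul_le σ a b)
  rw [Setoid.glue_eq_self h] at hle
  exact lt_of_le_of_ne hle (numCycles_swap_mul_ne hab σ).symm

theorem numCycles_swap_mul_lt {σ : Perm α} {a b : α} (h : ¬ σ.SameCycle a b) :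
    numCycles (swap a b * σ) < numCycles σ := by
  have hab : a ≠ b := fun hab => h (hab ▸ SameCycle.rfl)
  have hle : numCycles (swap a b * σ) ≤ numCycles σ := by
    have := Setoid.card_quotient_glue_lt (s := SameCycle.setoid σ) h
    rw [← glue_sameCycle_setoid_swap_mul] at this
    exact Setoid.card_quotient_le_card_quotient_glue_add_one.trans this
  exact lt_of_le_of_ne hle (numCycles_swap_mul_ne hab σ)

theorem exists_isSwap_list_prod_eq (σ : Perm α) :
    ∃ l : List (Perm α), (∀ t ∈ l, t.IsSwap) ∧ l.prod = σ ∧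
      l.length + numCycles σ = Fintype.card α := by
  induction h : #σ.support using Nat.strong_induction_on generalizing σ with
  | _ n ih =>
  rcases eq_or_ne σ 1 with rfl | hσ
  · exact ⟨[], by simp, by simp, by simp⟩
  obtain ⟨x, hx⟩ : ∃ x, σ x ≠ x := not_forall.mp fun h => hσ (Equiv.ext h)
  obtain ⟨l, hl, hprod, hlen⟩ := ih _ (h ▸ card_support_swap_mul hx) (swap x (σ x) * σ) rfl
  have hlt := numCycles_lt_numCycles_swap_mul (Ne.symm hx) (⟨1, rfl⟩ : σ.SameCycle x (σ x))
  have hle := numCycles_swap_mul_le_add_one σ x (σ x)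
  refine ⟨swap x (σ x) :: l, ?_, by rw [List.prod_cons, hprod, swap_mul_self_mul], ?_⟩
  · exact List.forall_mem_cons.mpr ⟨⟨x, σ x, Ne.symm hx, rfl⟩, hl⟩
  · rw [List.length_cons]
    omega

theorem card_add_numCycles_prod_le_of_isSwap (L : List (Perm α)) (hL : ∀ t ∈ L, t.IsSwap) :
    Fintype.card α + numCycles L.prod ≤
      2 * Nat.card (Quotient (orbitSetoid {g | g ∈ L})) + L.length := by
  induction L with
  | nil =>
    have hbot : orbitSetoid {g | g ∈ ([] : List (Perm α))} ≤ ⊥ :=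
      orbitSetoid_le_iff.mpr fun _ h => absurd h List.not_mem_nil
    have := Setoid.card_quotient_le_of_le hbot
    rw [Nat.card_congr Setoid.quotientBotEquiv, Nat.card_eq_fintype_card] at this
    simp only [List.prod_nil, numCycles_one, List.length_nil]
    omega
  | cons t L ih =>
  obtain ⟨a, b, hab, rfl⟩ := hL t List.mem_cons_self
  have ih := ih fun t ht => hL t (List.mem_cons_of_mem _ ht)
  have hset : {g | g ∈ swap a b :: L} = insert (swap a b) {g | g ∈ L} := by
    ext
    simp
  rw [hset, orbitSetoid_insert_swap, List.prod_cons, List.length_cons]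
  by_cases hrel : orbitSetoid {g | g ∈ L} a b
  · rw [Setoid.glue_eq_self hrel]
    have := numCycles_swap_mul_le_add_one L.prod a b
    omega
  · have hL : ¬ L.prod.SameCycle a b := fun h => hrel <| Setoid.sameCycle_setoid_le
      (list_prod_mem fun g hg => orbitSetoid_le_iff.mp le_rfl hg) h
    have := numCycles_swap_mul_lt hL
    have := Setoid.card_quotient_le_card_quotient_glue_add_one
      (s := orbitSetoid {g | g ∈ L}) (a := a) (b := b)
    omega

-- Ree's inequality
theorem two_mul_card_le_of_list_prod_eq_one (l : List (Perm α)) (hl : l.prod = 1) :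
    2 * Fintype.card α ≤ 2 * Nat.card (Quotient (orbitSetoid {g | g ∈ l})) +
      (l.map fun g => Fintype.card α - numCycles g).sum := by
  choose d hd_swap hd_prod hd_len using exists_isSwap_list_prod_eq (α := α)
  set L := (l.map d).flatten
  have hL := card_add_numCycles_prod_le_of_isSwap L fun t ht => by
    obtain ⟨_, hmem, ht⟩ := List.mem_flatten.mp ht
    obtain ⟨g, -, rfl⟩ := List.mem_map.mp hmem
    exact hd_swap g t ht
  have hprod : L.prod = 1 := by
    simp only [L, List.prod_flatten, List.map_map, Function.comp_def, hd_prod, List.map_id', hl]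
  have hlen : L.length = (l.map fun g => Fintype.card α - numCycles g).sum := by
    simp only [L, List.length_flatten, List.map_map, Function.comp_def]
    congr 2 with g
    exact Nat.eq_sub_of_add_eq (hd_len g)
  have horb : orbitSetoid {g | g ∈ l} ≤ orbitSetoid {t | t ∈ L} :=
    orbitSetoid_le_iff.mpr fun g hg => hd_prod g ▸ list_prod_mem fun t ht =>
      orbitSetoid_le_iff.mp le_rfl (List.mem_flatten.mpr ⟨d g, List.mem_map_of_mem hg, ht⟩)
  have := Setoid.card_quotient_le_of_le horb
  rw [hprod, numCycles_one] at hL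
  omega

theorem pow_eq_one_of_cycleType_eq_replicate {σ : Perm α} {r n : ℕ}
    (h : σ.cycleType = .replicate r n) : σ ^ n = 1 :=
  orderOf_dvd_iff_pow_eq_one.mp <| lcm_cycleType σ ▸ Multiset.lcm_dvd.mpr fun a ha => by
    rw [h] at ha
    rw [Multiset.eq_of_mem_replicate ha]

theorem card_sub_numCycles_le_of_pow_eq_one {σ : Perm α} {n d : ℕ} (hn : σ ^ n = 1)
    (hpos : 0 < n) (hsupp : #σ.support = n * d) :
    Fintype.card α - numCycles σ ≤ (n - 1) * d := by
  -- cycles have length at most `n`, so there are at least `d` of them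
  have hcycles : d ≤ Multiset.card σ.cycleType := by
    refine Nat.le_of_mul_le_mul_left ?_ hpos
    rw [← hsupp, ← sum_cycleType, mul_comm, ← smul_eq_mul]
    exact Multiset.sum_le_card_nsmul _ _ fun a ha =>
      Nat.le_of_dvd hpos ((dvd_of_mem_cycleType ha).trans (orderOf_dvd_of_pow_eq_one hn))
  have := numCycles_add_card_support σ
  rw [hsupp] at this
  rw [Nat.sub_one_mul]
  omega

theorem cycleType_eq_of_fullCycleType_eq {σ : Perm α} {M : Multiset ℕ} {r : ℕ}
    (h : fullCycleType σ = M + .replicate r 1) (hM : ∀ a ∈ M, 2 ≤ a) : σ.cycleType = M := by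
  have hparts : σ.partition.parts = fullCycleType σ := by
    rw [parts_partition, fullCycleType, sum_cycleType]
  rw [← filter_parts_partition_eq_cycleType, hparts, h, Multiset.filter_add,
    Multiset.filter_eq_self.mpr hM, Multiset.filter_eq_nil.mpr fun a ha => by
      rw [Multiset.eq_of_mem_replicate ha]; omega, add_zero]

end NumCycles

section ProdCongrAddRight

variable {X A : Type*} [AddCommGroup A]

def prodCongrAddRight : Perm X × Multiplicative A →* Perm (X × A) where
  toFun p := prodCongr p.1 (Equiv.addRight p.2.toAdd)
  map_one' := by ext <;> simp
  map_mul' p q := by ext <;> simp [add_assoc, add_comm p.2.toAdd]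

@[simp]
theorem prodCongrAddRight_apply (p : Perm X × Multiplicative A) (z : X × A) :
    prodCongrAddRight p z = (p.1 z.1, z.2 + p.2.toAdd) := rfl

theorem prodCongrAddRight_pow_eq_one {g : Perm X} {e : A} {n : ℕ} (hg : g ^ n = 1)
    (he : n • e = 0) : prodCongrAddRight (g, Multiplicative.ofAdd e) ^ n = 1 := by
  rw [← map_pow, Prod.pow_mk, hg, ← ofAdd_nsmul, he, ofAdd_zero]
  exact map_one _

theorem exists_orbitSetoid_prodCongrAddRight {ι : Type*} (p : ι → Perm X × Multiplicative A)
    {x y : X} (hxy : ∃ g ∈ Subgroup.closure (Set.range fun i => (p i).1), g x = y) (j : A) :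
    ∃ j', orbitSetoid (Set.range (prodCongrAddRight ∘ p)) (x, j) (y, j') := by
  obtain ⟨g, hg, rfl⟩ := hxy
  rw [show (Set.range fun i => (p i).1) = MonoidHom.fst _ _ '' Set.range p from
    Set.range_comp _ p, ← MonoidHom.map_closure] at hg
  obtain ⟨q, hq, rfl⟩ := Subgroup.mem_map.mp hg
  have hq' : prodCongrAddRight q ∈ Subgroup.closure (Set.range (prodCongrAddRight ∘ p)) := by
    rw [Set.range_comp, ← MonoidHom.map_closure]
    exact Subgroup.mem_map_of_mem _ hq
  exact ⟨_, closure_le_classStabilizer_orbitSetoid hq' (x, j)⟩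

variable [Fintype X] [DecidableEq X] [Fintype A] [DecidableEq A]

theorem support_prodCongrAddRight_of_ne_zero (g : Perm X) {e : A} (he : e ≠ 0) :
    (prodCongrAddRight (g, Multiplicative.ofAdd e)).support = univ := by
  ext ⟨x, j⟩
  simp [he]

theorem card_support_prodCongrAddRight_one (g : Perm X) :
    #(prodCongrAddRight (g, (1 : Multiplicative A))).support = #g.support * Fintype.card A := by
  rw [← card_univ, ← card_product]
  congr 1
  ext ⟨x, j⟩
  simp

theorem card_mul_card_support_le {k : ℕ} [NeZero k] {s : Setoid (X × ZMod k)}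
    (hsec : ∀ y i j, s (y, i) (y, j) → i = j) {g h : Perm X}
    (hg : prodCongrAddRight (g, Multiplicative.ofAdd 1) ∈ s.classStabilizer)
    (hh : prodCongrAddRight (h, 1) ∈ s.classStabilizer) (hcyc : h.IsCycle) :
    k * #h.support ≤ Fintype.card X := by
  obtain ⟨x₀, hx₀⟩ := hcyc.nonempty_support
  have hlevel : ∀ x ∈ h.support, s (x₀, 0) (x, 0) := fun x hx => by
    obtain ⟨i, rfl⟩ := hcyc.sameCycle (mem_support.mp hx₀) (mem_support.mp hx)
    simpa [← map_zpow] using zpow_mem hh i (x₀, 0)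
  have hshift : ∀ (i : ZMod k) x, s (x, 0) ((g ^ i.val) x, i) := fun i x => by
    simpa [← map_pow] using pow_mem hg i.val (x, 0)
  -- the translates `g ^ i (support h)`, `i : ZMod k`, lie on distinct levels
  have hinj : Function.Injective fun p : ZMod k × h.support => (g ^ p.1.val) p.2 := by
    rintro ⟨i, x, hx⟩ ⟨i', x', hx'⟩ (heq : (g ^ i.val) x = (g ^ i'.val) x')
    have h₁ := s.trans (hlevel x hx) (hshift i x)
    have h₂ := s.trans (hlevel x' hx') (hshift i' x')
    rw [← heq] at h₂
    obtain rfl : i = i' := hsec _ _ _ (s.trans (s.symm h₁) h₂)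
    simpa using heq
  simpa only [Fintype.card_prod, ZMod.card, Fintype.card_coe] using
    Fintype.card_le_of_injective _ hinj

end ProdCongrAddRight

section CyclicLift

variable {X : Type*} {k m : ℕ}

def cyclicLift (τ : Fin (m + 1) → Perm X) (i : Fin (m + 1)) :
    Perm X × Multiplicative (ZMod k) :=
  (τ i, .ofAdd (if (i : ℕ) = 0 then 1 else if (i : ℕ) = 1 then -1 else 0))

theorem list_prod_ofFn_cyclicLift (hm : 1 ≤ m) {τ : Fin (m + 1) → Perm X}
    (h : (List.ofFn τ).prod = 1) : (List.ofFn (cyclicLift (k := k) τ)).prod = 1 := by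
  obtain ⟨m, rfl⟩ : ∃ m', m = m' + 1 := ⟨m - 1, by omega⟩
  ext1
  · have := map_list_prod (MonoidHom.fst _ _) (List.ofFn (cyclicLift (k := k) τ))
    rw [MonoidHom.coe_fst, List.map_ofFn] at this
    exact this.trans h
  · have := map_list_prod (MonoidHom.snd _ _) (List.ofFn (cyclicLift (k := k) τ))
    rw [MonoidHom.coe_snd, List.map_ofFn, List.prod_ofFn] at this
    rw [this, Prod.snd_one]
    simp only [Function.comp_apply, cyclicLift, ← ofAdd_sum, ofAdd_eq_one, Fin.sum_univ_succ]
    simp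

theorem cyclicLift_of_two_le {τ : Fin (m + 1) → Perm X} {i : Fin (m + 1)} (hi : 2 ≤ (i : ℕ)) :
    cyclicLift (k := k) τ i = (τ i, 1) := by
  simp [cyclicLift, show (i : ℕ) ≠ 0 by omega, show (i : ℕ) ≠ 1 by omega]

variable [Fintype X] [DecidableEq X]

theorem card_sub_numCycles_cyclicLift_le_of_lt_two [NeZero k] [Fact (1 < k)]
    {τ : Fin (m + 1) → Perm X} {i : Fin (m + 1)} (hi : (i : ℕ) < 2) {r : ℕ}
    (hτ : (τ i).cycleType = .replicate r k) :
    Fintype.card (X × ZMod k) - numCycles (prodCongrAddRight (cyclicLift (k := k) τ i)) ≤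
      (k - 1) * Fintype.card X := by
  have hε : (if (i : ℕ) = 0 then 1 else if (i : ℕ) = 1 then -1 else 0 : ZMod k) ≠ 0 := by
    rcases (by omega : (i : ℕ) = 0 ∨ (i : ℕ) = 1) with hi | hi <;> simp [hi]
  refine card_sub_numCycles_le_of_pow_eq_one (prodCongrAddRight_pow_eq_one
    (pow_eq_one_of_cycleType_eq_replicate hτ) (by simp)) (NeZero.pos k) ?_
  rw [cyclicLift, support_prodCongrAddRight_of_ne_zero _ hε, card_univ, Fintype.card_prod,
    ZMod.card, mul_comm]

theorem card_sub_numCycles_cyclicLift_le_of_two_le [NeZero k] {τ : Fin (m + 1) → Perm X}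
    {i : Fin (m + 1)} (hi : 2 ≤ (i : ℕ)) {n : ℕ} (hτ : (τ i).cycleType = {n}) :
    Fintype.card (X × ZMod k) - numCycles (prodCongrAddRight (cyclicLift (k := k) τ i)) ≤
      (n - 1) * k := by
  have hpos : 0 < n := by
    have := two_le_of_mem_cycleType (hτ ▸ Multiset.mem_singleton_self n)
    omega
  refine card_sub_numCycles_le_of_pow_eq_one ?_ hpos ?_
  · rw [cyclicLift_of_two_le hi, ← map_pow, Prod.pow_mk, one_pow,
      pow_eq_one_of_cycleType_eq_replicate (hτ.trans (Multiset.replicate_one n).symm)]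
    exact map_one _
  · rw [cyclicLift_of_two_le hi, card_support_prodCongrAddRight_one, ← sum_cycleType, hτ,
      Multiset.sum_singleton, ZMod.card]

theorem le_card_quotient_orbitSetoid_cyclicLift (hk : 2 ≤ k) (hm : 2 ≤ m)
    (hX : Fintype.card X = k * m) {τ : Fin (m + 1) → Perm X} (hprod : (List.ofFn τ).prod = 1)
    (h01 : ∀ i : Fin (m + 1), (i : ℕ) = 0 ∨ (i : ℕ) = 1 → (τ i).cycleType = .replicate m k)
    (h2 : ∀ i : Fin (m + 1), (i : ℕ) = 2 → (τ i).cycleType = {m + 1})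
    (h3 : ∀ i : Fin (m + 1), 3 ≤ (i : ℕ) → (τ i).cycleType = {2}) :
    k ≤ Nat.card (Quotient (orbitSetoid
      (Set.range (prodCongrAddRight ∘ cyclicLift (k := k) τ)))) := by
  have : NeZero k := ⟨by omega⟩
  have : Fact (1 < k) := ⟨hk⟩
  have hree := two_mul_card_le_of_list_prod_eq_one
    (List.ofFn (prodCongrAddRight ∘ cyclicLift (k := k) τ)) (by
      rw [← List.map_ofFn, ← map_list_prod, list_prod_ofFn_cyclicLift (by omega) hprod, map_one])
  rw [show {g | g ∈ List.ofFn (prodCongrAddRight ∘ cyclicLift (k := k) τ)} = Set.range _ from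
    Set.ext fun _ => List.mem_ofFn, List.map_ofFn, List.sum_ofFn] at hree
  simp only [Function.comp_apply] at hree
  obtain ⟨m, rfl⟩ : ∃ m', m = m' + 2 := ⟨m - 2, by omega⟩
  rw [Fin.sum_univ_succ, Fin.sum_univ_succ, Fin.sum_univ_succ] at hree
  have hrest : ∑ j : Fin m, (Fintype.card (X × ZMod k) -
      numCycles (prodCongrAddRight (cyclicLift (k := k) τ j.succ.succ.succ))) ≤ m * k := by
    refine (sum_le_card_nsmul univ _ ((2 - 1) * k) fun j _ =>
      card_sub_numCycles_cyclicLift_le_of_two_le (k := k) (by simp)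
        (h3 _ (by simp only [Fin.val_succ]; omega))).trans ?_
    simp
  have h₂ : ((Fin.succ (Fin.succ 0) : Fin (m + 2 + 1)) : ℕ) = 2 := by
    rw [Fin.val_succ, Fin.val_succ]
    simp
  have hD₀ := card_sub_numCycles_cyclicLift_le_of_lt_two (by simp) (h01 0 (by simp))
  have hD₁ := card_sub_numCycles_cyclicLift_le_of_lt_two (by simp) (h01 (Fin.succ 0) (by simp))
  have hD₂ := card_sub_numCycles_cyclicLift_le_of_two_le (k := k) h₂.ge (h2 _ h₂)
  have : Fintype.card (X × ZMod k) = k * (k * (m + 2)) := by simp [hX, mul_comm]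
  rw [hX] at hD₀ hD₁
  rw [Nat.add_sub_cancel] at hD₂
  have : (k - 1) * (k * (m + 2)) = k * (k * (m + 2)) - k * (m + 2) := Nat.sub_one_mul _ _
  have : k * (m + 2) ≤ k * (k * (m + 2)) := Nat.le_mul_of_pos_left _ (by omega)
  have : k * (m + 2) = m * k + 2 * k := by ring
  have : (m + 2) * k = m * k + 2 * k := by ring
  omega

end CyclicLift

end Equiv.Perm

/-- first exceptional series of Section 1. For `k, m ≥ 2`,
`d = km`, `n = m + 1`, the partitions `(k,…,k)`, `(k,…,k)`,
`(m+1,1,…,1)`, and `m − 2` copies of `(2,1,…,1)` are not realized by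
permutations. -/
theorem stmt14 (k m : ℕ) (hk : 2 ≤ k) (hm : 2 ≤ m) :
    ¬ realizable (k * m) (m + 1) (fun i =>
      if (i : ℕ) = 0 then Multiset.replicate m k
      else if (i : ℕ) = 1 then Multiset.replicate m k
      else if (i : ℕ) = 2 then {m + 1} + Multiset.replicate (k * m - m - 1) 1
      else {2} + Multiset.replicate (k * m - 2) 1) := by
  rintro ⟨τ, hprod, htrans, hparts⟩
  have h01 : ∀ i : Fin (m + 1), (i : ℕ) = 0 ∨ (i : ℕ) = 1 →
      (τ i).cycleType = .replicate m k := by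
    rintro i (hi | hi) <;> exact cycleType_eq_of_fullCycleType_eq (r := 0)
      (by simpa [hi] using hparts i) fun a ha => Multiset.eq_of_mem_replicate ha ▸ hk
  have h2 : ∀ i : Fin (m + 1), (i : ℕ) = 2 → (τ i).cycleType = {m + 1} := fun i hi =>
    cycleType_eq_of_fullCycleType_eq (by simpa [hi] using hparts i) fun a ha => by
      rw [Multiset.mem_singleton.mp ha]
      omega
  have h3 : ∀ i : Fin (m + 1), 3 ≤ (i : ℕ) → (τ i).cycleType = {2} := fun i hi => by
    have : (i : ℕ) ≠ 0 ∧ (i : ℕ) ≠ 1 ∧ (i : ℕ) ≠ 2 := by omega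
    exact cycleType_eq_of_fullCycleType_eq (by simpa [this] using hparts i) (by simp)
  have : NeZero k := ⟨by omega⟩
  set s := orbitSetoid (Set.range (prodCongrAddRight ∘ cyclicLift (k := k) τ))
  have hsec : ∀ y i j, s (y, i) (y, j) → i = j := fun _ _ _ =>
    Setoid.eq_of_rel_of_card_le
      (fun x y j => exists_orbitSetoid_prodCongrAddRight (cyclicLift τ) (htrans x y) j)
      ((Nat.card_zmod k).trans_le
        (le_card_quotient_orbitSetoid_cyclicLift hk hm (Fintype.card_fin _) hprod h01 h2 h3))
  have hlift (i) : prodCongrAddRight (cyclicLift τ i) ∈ s.classStabilizer :=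
    orbitSetoid_le_iff.mp le_rfl ⟨i, rfl⟩
  have hτ₂ := h2 ⟨2, by omega⟩ rfl
  have := card_mul_card_support_le hsec (g := τ ⟨0, by omega⟩) (h := τ ⟨2, by omega⟩)
    (hlift ⟨0, by omega⟩) (hlift ⟨2, by omega⟩) (card_cycleType_eq_one.mp (by rw [hτ₂]; rfl))
  rw [← sum_cycleType, hτ₂, Multiset.sum_singleton, Fintype.card_fin] at this
  nlinarith
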